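/- Under the two-element tensor-product SBP–SAT setting, assume the projection matrices satisfy the degree-0 conditions R_L^{1D} 1 = 1_Γ, R_R^{1D} 1 = 1_Γ, (R_L^{1D})ᵀ M_Γ 1_Γ = H_{η,L} 1, and (R_R^{1D})ᵀ M_Γ 1_Γ = H_{η,R} 1, where 1_Γ ∈ ℝ^{N_Γ} is the all-ones vector. Then for all solution vectors u_L, u_R the total numerical flux through the shared interface is single-valued: 1ᵀ f*_L = 1ᵀ f*_R, and both sides equal (λ/2)( 1ᵀ E_{ξN,L} u_L + 1ᵀ E_{ξ1,R} u_R ) − (σ|λ|/2)( 1ᵀ E_{ξ1,R} u_R − 1ᵀ E_{ξN,L} u_L ). -/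

import Mathlib

open Matrix
open scoped Kronecker

noncomputable section

/-- Boundary matrix `e_i e_iᵀ` built from the `i`-th standard basis vector. -/
def bmat {n : ℕ} (i : Fin n) : Matrix (Fin n) (Fin n) ℝ :=
  vecMulVec (Pi.single i 1) (Pi.single i 1)

/-- Two-dimensional projection `e_iᵀ ⊗ R1` onto the intermediate interface grid:
it restricts the solution to the face `ξ`-index `i` and applies the
one-dimensional projection `R1`. -/
def proj2D {nx ny NΓ : ℕ} (i : Fin nx) (R1 : Matrix (Fin NΓ) (Fin ny) ℝ) :
    Matrix (Fin NΓ) (Fin nx × Fin ny) ℝ :=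
  Matrix.of fun g q => (if q.1 = i then 1 else 0) * R1 g q.2

/-! The row-sum condition `R₁ 1 = 1` turns `1ᵀ R₁ᵀ` into `1_Γᵀ`; symmetry of `M_Γ` and the
compatibility `R₂ᵀ M_Γ 1_Γ = H 1` then turn `1_Γᵀ M_Γ R₂ u` into the face quadrature `1ᵀ E u`.
So every interface coupling term in `f*_L` and `f*_R` sums to the surface term of the element
it reads from, and both totals reduce to the same combination of `1ᵀ E_{ξN,L} u_L` and
`1ᵀ E_{ξ1,R} u_R`. -/

section
variable {nx ny NΓ : ℕ}

theorem proj2D_mulVec_one (i : Fin nx) (R1 : Matrix (Fin NΓ) (Fin ny) ℝ) :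
    proj2D i R1 *ᵥ (fun _ => (1:ℝ)) = R1 *ᵥ (fun _ => (1:ℝ)) := by
  funext g
  simp [proj2D, mulVec, dotProduct, Fintype.sum_prod_type, ite_mul]

theorem dotProduct_proj2D_mulVec (i : Fin nx) (R1 : Matrix (Fin NΓ) (Fin ny) ℝ)
    (w : Fin NΓ → ℝ) (u : Fin nx × Fin ny → ℝ) :
    w ⬝ᵥ (proj2D i R1 *ᵥ u) = (w ᵥ* R1) ⬝ᵥ fun q => u (i, q) := by
  simp [dotProduct, mulVec, vecMul, proj2D, Fintype.sum_prod_type, Finset.mul_sum,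
    Finset.sum_mul]
  rw [Finset.sum_comm]
  simp [mul_assoc]

theorem one_dotProduct_bmat_kronecker_mulVec (i : Fin nx) (Hy : Matrix (Fin ny) (Fin ny) ℝ)
    (u : Fin nx × Fin ny → ℝ) :
    (fun _ => (1:ℝ)) ⬝ᵥ ((bmat i ⊗ₖ Hy) *ᵥ u) = ((fun _ => (1:ℝ)) ᵥ* Hy) ⬝ᵥ fun q => u (i, q) := by
  simp [dotProduct, mulVec, vecMul, bmat, vecMulVec_apply, Pi.single_apply, Fintype.sum_prod_type,
    Finset.sum_mul]
  rw [Finset.sum_comm]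

end

theorem one_dotProduct_proj2D_coupling {nx ny nx' ny' NΓ : ℕ} {M : Matrix (Fin NΓ) (Fin NΓ) ℝ}
    (hM : Mᵀ = M) {R1 : Matrix (Fin NΓ) (Fin ny) ℝ} {R2 : Matrix (Fin NΓ) (Fin ny') ℝ}
    {Hy : Matrix (Fin ny') (Fin ny') ℝ} (hHy : Hy.IsSymm)
    (hR1 : R1 *ᵥ (fun _ => (1:ℝ)) = fun _ => (1:ℝ))
    (hR2 : R2ᵀ *ᵥ (M *ᵥ fun _ => (1:ℝ)) = Hy *ᵥ fun _ => (1:ℝ))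
    (i : Fin nx) (j : Fin nx') (u : Fin nx' × Fin ny' → ℝ) :
    (fun _ => (1:ℝ)) ⬝ᵥ ((proj2D i R1)ᵀ *ᵥ (M *ᵥ (proj2D j R2 *ᵥ u)))
      = (fun _ => (1:ℝ)) ⬝ᵥ ((bmat j ⊗ₖ Hy) *ᵥ u) := by
  have hR2_vecMul : ((fun _ => (1:ℝ)) ᵥ* M) ᵥ* R2 = (fun _ => (1:ℝ)) ᵥ* Hy := by
    rw [← mulVec_transpose M, hM, ← mulVec_transpose, hR2, ← mulVec_transpose, hHy.eq]
  rw [dotProduct_mulVec, vecMul_transpose, proj2D_mulVec_one, hR1, dotProduct_mulVec,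
    dotProduct_proj2D_mulVec, hR2_vecMul, one_dotProduct_bmat_kronecker_mulVec]

theorem nonconforming_flux_single_valued_general
    {nxL nyL nxR nyR NΓ : ℕ}
    -- norm matrices (diagonal with positive entries)
    (HyL : Matrix (Fin (nyL + 1)) (Fin (nyL + 1)) ℝ)
    (HyR : Matrix (Fin (nyR + 1)) (Fin (nyR + 1)) ℝ)
    (hHyLd : HyL.IsDiag)
    (hHyRd : HyR.IsDiag)
    -- intermediate interface grid with symmetric norm matrix
    (MΓ : Matrix (Fin NΓ) (Fin NΓ) ℝ) (hMΓ : MΓᵀ = MΓ)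
    (RL1 : Matrix (Fin NΓ) (Fin (nyL + 1)) ℝ)
    (RR1 : Matrix (Fin NΓ) (Fin (nyR + 1)) ℝ)
    -- degree-0 conditions on the projections
    (hRL10 : RL1 *ᵥ (fun _ => (1:ℝ)) = fun _ => (1:ℝ))
    (hRR10 : RR1 *ᵥ (fun _ => (1:ℝ)) = fun _ => (1:ℝ))
    (hRL10d : RL1ᵀ *ᵥ (MΓ *ᵥ fun _ => (1:ℝ)) = HyL *ᵥ fun _ => (1:ℝ))
    (hRR10d : RR1ᵀ *ᵥ (MΓ *ᵥ fun _ => (1:ℝ)) = HyR *ᵥ fun _ => (1:ℝ))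
    -- two-dimensional surface operators and projections
    (ExNL : Matrix (Fin (nxL + 1) × Fin (nyL + 1)) (Fin (nxL + 1) × Fin (nyL + 1)) ℝ)
    (hExNL : ExNL = bmat (Fin.last nxL) ⊗ₖ HyL)
    (Ex1R : Matrix (Fin (nxR + 1) × Fin (nyR + 1)) (Fin (nxR + 1) × Fin (nyR + 1)) ℝ)
    (hEx1R : Ex1R = bmat 0 ⊗ₖ HyR)
    (RL : Matrix (Fin NΓ) (Fin (nxL + 1) × Fin (nyL + 1)) ℝ)
    (hRL : RL = proj2D (Fin.last nxL) RL1)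
    (RR : Matrix (Fin NΓ) (Fin (nxR + 1) × Fin (nyR + 1)) ℝ)
    (hRR : RR = proj2D 0 RR1)
    -- wave speed, SAT parameter, solution vectors, numerical fluxes
    (lam σ : ℝ)
    (uL : Fin (nxL + 1) × Fin (nyL + 1) → ℝ)
    (uR : Fin (nxR + 1) × Fin (nyR + 1) → ℝ)
    (fL : Fin (nxL + 1) × Fin (nyL + 1) → ℝ)
    (hfL : fL =
      (lam / 2) • (ExNL *ᵥ uL + RLᵀ *ᵥ (MΓ *ᵥ (RR *ᵥ uR)))
        - (σ * |lam| / 2) • (RLᵀ *ᵥ (MΓ *ᵥ (RR *ᵥ uR)) - RLᵀ *ᵥ (MΓ *ᵥ (RL *ᵥ uL))))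
    (fR : Fin (nxR + 1) × Fin (nyR + 1) → ℝ)
    (hfR : fR =
      (lam / 2) • (Ex1R *ᵥ uR + RRᵀ *ᵥ (MΓ *ᵥ (RL *ᵥ uL)))
        - (σ * |lam| / 2) • (RRᵀ *ᵥ (MΓ *ᵥ (RR *ᵥ uR)) - RRᵀ *ᵥ (MΓ *ᵥ (RL *ᵥ uL)))) :
    (fun _ => (1:ℝ)) ⬝ᵥ fL = (fun _ => (1:ℝ)) ⬝ᵥ fR ∧
    (fun _ => (1:ℝ)) ⬝ᵥ fL =
      (lam / 2) * ((fun _ => (1:ℝ)) ⬝ᵥ (ExNL *ᵥ uL)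
          + (fun _ => (1:ℝ)) ⬝ᵥ (Ex1R *ᵥ uR))
        - (σ * |lam| / 2) * ((fun _ => (1:ℝ)) ⬝ᵥ (Ex1R *ᵥ uR)
          - (fun _ => (1:ℝ)) ⬝ᵥ (ExNL *ᵥ uL)) := by
  subst hExNL hEx1R hRL hRR hfL hfR
  have sumLL := one_dotProduct_proj2D_coupling hMΓ hHyLd.isSymm hRL10 hRL10d
    (Fin.last nxL) (Fin.last nxL) uL
  have sumLR := one_dotProduct_proj2D_coupling hMΓ hHyRd.isSymm hRL10 hRR10d
    (Fin.last nxL) (0 : Fin (nxR + 1)) uR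
  have sumRL := one_dotProduct_proj2D_coupling hMΓ hHyLd.isSymm hRR10 hRL10d
    (0 : Fin (nxR + 1)) (Fin.last nxL) uL
  have sumRR := one_dotProduct_proj2D_coupling hMΓ hHyRd.isSymm hRR10 hRR10d
    (0 : Fin (nxR + 1)) (0 : Fin (nxR + 1)) uR
  simp only [dotProduct_sub, dotProduct_add, dotProduct_smul, smul_eq_mul,
    sumLL, sumLR, sumRL, sumRR, and_true]
  ring

/-- **The total numerical flux through the interface is single-valued.**
In the two-element tensor-product SBP–SAT setting, if the projection matrices
satisfy the degree-0 conditions, then `1ᵀ f*_L = 1ᵀ f*_R`, both being equal to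
`(λ/2)(1ᵀ E_{ξN,L} u_L + 1ᵀ E_{ξ1,R} u_R) − (σ|λ|/2)(1ᵀ E_{ξ1,R} u_R − 1ᵀ E_{ξN,L} u_L)`. -/
theorem nonconforming_flux_single_valued
    {nxL nyL nxR nyR NΓ : ℕ}
    -- norm matrices (diagonal with positive entries)
    (HyL : Matrix (Fin (nyL + 1)) (Fin (nyL + 1)) ℝ)
    (HyR : Matrix (Fin (nyR + 1)) (Fin (nyR + 1)) ℝ)
    (hHyLd : HyL.IsDiag) (hHyLp : ∀ i, 0 < HyL i i)
    (hHyRd : HyR.IsDiag) (hHyRp : ∀ i, 0 < HyR i i)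
    -- intermediate interface grid with symmetric norm matrix
    (MΓ : Matrix (Fin NΓ) (Fin NΓ) ℝ) (hMΓ : MΓᵀ = MΓ)
    (RL1 : Matrix (Fin NΓ) (Fin (nyL + 1)) ℝ)
    (RR1 : Matrix (Fin NΓ) (Fin (nyR + 1)) ℝ)
    -- degree-0 conditions on the projections
    (hRL10 : RL1 *ᵥ (fun _ => (1:ℝ)) = fun _ => (1:ℝ))
    (hRR10 : RR1 *ᵥ (fun _ => (1:ℝ)) = fun _ => (1:ℝ))
    (hRL10d : RL1ᵀ *ᵥ (MΓ *ᵥ fun _ => (1:ℝ)) = HyL *ᵥ fun _ => (1:ℝ))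
    (hRR10d : RR1ᵀ *ᵥ (MΓ *ᵥ fun _ => (1:ℝ)) = HyR *ᵥ fun _ => (1:ℝ))
    -- two-dimensional surface operators and projections
    (ExNL : Matrix (Fin (nxL + 1) × Fin (nyL + 1)) (Fin (nxL + 1) × Fin (nyL + 1)) ℝ)
    (hExNL : ExNL = bmat (Fin.last nxL) ⊗ₖ HyL)
    (Ex1R : Matrix (Fin (nxR + 1) × Fin (nyR + 1)) (Fin (nxR + 1) × Fin (nyR + 1)) ℝ)
    (hEx1R : Ex1R = bmat 0 ⊗ₖ HyR)
    (RL : Matrix (Fin NΓ) (Fin (nxL + 1) × Fin (nyL + 1)) ℝ)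
    (hRL : RL = proj2D (Fin.last nxL) RL1)
    (RR : Matrix (Fin NΓ) (Fin (nxR + 1) × Fin (nyR + 1)) ℝ)
    (hRR : RR = proj2D 0 RR1)
    -- wave speed, SAT parameter, solution vectors, numerical fluxes
    (lam σ : ℝ)
    (uL : Fin (nxL + 1) × Fin (nyL + 1) → ℝ)
    (uR : Fin (nxR + 1) × Fin (nyR + 1) → ℝ)
    (fL : Fin (nxL + 1) × Fin (nyL + 1) → ℝ)
    (hfL : fL =
      (lam / 2) • (ExNL *ᵥ uL + RLᵀ *ᵥ (MΓ *ᵥ (RR *ᵥ uR)))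
        - (σ * |lam| / 2) • (RLᵀ *ᵥ (MΓ *ᵥ (RR *ᵥ uR)) - RLᵀ *ᵥ (MΓ *ᵥ (RL *ᵥ uL))))
    (fR : Fin (nxR + 1) × Fin (nyR + 1) → ℝ)
    (hfR : fR =
      (lam / 2) • (Ex1R *ᵥ uR + RRᵀ *ᵥ (MΓ *ᵥ (RL *ᵥ uL)))
        - (σ * |lam| / 2) • (RRᵀ *ᵥ (MΓ *ᵥ (RR *ᵥ uR)) - RRᵀ *ᵥ (MΓ *ᵥ (RL *ᵥ uL)))) :
    (fun _ => (1:ℝ)) ⬝ᵥ fL = (fun _ => (1:ℝ)) ⬝ᵥ fR ∧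
    (fun _ => (1:ℝ)) ⬝ᵥ fL =
      (lam / 2) * ((fun _ => (1:ℝ)) ⬝ᵥ (ExNL *ᵥ uL)
          + (fun _ => (1:ℝ)) ⬝ᵥ (Ex1R *ᵥ uR))
        - (σ * |lam| / 2) * ((fun _ => (1:ℝ)) ⬝ᵥ (Ex1R *ᵥ uR)
          - (fun _ => (1:ℝ)) ⬝ᵥ (ExNL *ᵥ uL)) :=
  nonconforming_flux_single_valued_general HyL HyR hHyLd hHyRd MΓ hMΓ RL1 RR1 hRL10 hRR10 hRL10d
    hRR10d ExNL hExNL Ex1R hEx1R RL hRL RR hRR lam σ uL uR fL hfL fR hfR
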